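/- For every h > 0, the image of the open disc {z ∈ ℂ : |z| < 2/h} under the map ζ_h equals the open horizontal strip {ζ ∈ ℂ : -π/(2h) < Im ζ < π/(2h)}. (Note that |z| < 2/h implies 1 + hz/2 ≠ 0 and 1 - hz/2 ≠ 0, so ζ_h(z) is defined on the disc.) -/

import Mathlib

/-!
Write `ζ_h = (1/h) · log ∘ C ∘ (h/2) ·` with the Cayley transform `C u = (1 + u) / (1 - u)`.
Since `Re (C u) = (1 - ‖u‖²) / ‖1 - u‖²`, `C` maps the unit disc onto the right half-plane, with
inverse `w ↦ (w - 1) / (w + 1)`; the principal logarithm maps the right half-plane onto the strip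
`|Im| < π/2`, with inverse `exp`. Rescaling by `h/2` and `1/h` gives the claim.
-/

open Set

lemma image_const_mul_setOf_norm_lt {𝕜 : Type*} [NormedDivisionRing 𝕜] {c : 𝕜} (hc : c ≠ 0)
    (r : ℝ) : (c * ·) '' {z | ‖z‖ < r} = {z | ‖z‖ < ‖c‖ * r} := by
  have hc' : 0 < ‖c‖ := norm_pos_iff.2 hc
  ext w
  constructor
  · rintro ⟨z, hz, rfl⟩
    simp only [mem_ofPred_eq, norm_mul] at hz ⊢
    gcongr
  · intro hw
    refine ⟨c⁻¹ * w, ?_, by simp [hc]⟩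
    simp only [mem_ofPred_eq, norm_mul, norm_inv] at hw ⊢
    rwa [inv_mul_lt_iff₀ hc']

namespace Complex

lemma image_ofReal_mul_preimage_im_Ioo {a : ℝ} (ha : 0 < a) (b : ℝ) :
    ((a : ℂ) * ·) '' (im ⁻¹' Ioo (-b) b) = im ⁻¹' Ioo (-(a * b)) (a * b) := by
  ext w
  constructor
  · rintro ⟨ζ, ⟨hζ₁, hζ₂⟩, rfl⟩
    simp only [mem_preimage, im_ofReal_mul, mem_Ioo]
    constructor <;> nlinarith
  · rintro ⟨hw₁, hw₂⟩
    have ha' : (a : ℂ) ≠ 0 := ofReal_ne_zero.2 ha.ne'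
    refine ⟨((a⁻¹ : ℝ) : ℂ) * w, ?_, by push_cast; field_simp⟩
    rw [mem_preimage, im_ofReal_mul, mem_Ioo, ← div_eq_inv_mul, lt_div_iff₀ ha, div_lt_iff₀ ha]
    constructor <;> linarith

lemma re_one_add_div_one_sub (u : ℂ) : ((1 + u) / (1 - u)).re = (1 - ‖u‖ ^ 2) / ‖1 - u‖ ^ 2 := by
  rw [div_re, ← add_div, Complex.sq_norm, Complex.sq_norm, normSq_apply, normSq_apply]
  congr 1
  simp only [add_re, sub_re, add_im, sub_im, one_re, one_im]
  ring

lemma norm_add_one_sq_sub_norm_sub_one_sq (w : ℂ) : ‖w + 1‖ ^ 2 - ‖w - 1‖ ^ 2 = 4 * w.re := by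
  simp only [Complex.sq_norm, normSq_apply, add_re, sub_re, add_im, sub_im, one_re, one_im]
  ring

lemma image_cayley_setOf_norm_lt_one :
    (fun u : ℂ => (1 + u) / (1 - u)) '' {u | ‖u‖ < 1} = {w | 0 < w.re} := by
  ext w
  constructor
  · rintro ⟨u, hu : ‖u‖ < 1, rfl⟩
    have hu1 : 1 - u ≠ 0 := fun h => by
      simp [show u = 1 by linear_combination -h] at hu
    show 0 < ((1 + u) / (1 - u)).re
    rw [re_one_add_div_one_sub]
    have : ‖u‖ ^ 2 < 1 := by nlinarith [norm_nonneg u]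
    have : 0 < ‖1 - u‖ := norm_pos_iff.2 hu1
    positivity
  · intro (hw : 0 < w.re)
    have hw1 : w + 1 ≠ 0 := fun h => by
      linarith [show w.re + 1 = 0 by simpa using congrArg re h]
    refine ⟨(w - 1) / (w + 1), ?_, by field_simp; ring⟩
    have hnorm : ‖w - 1‖ < ‖w + 1‖ := by
      have := norm_add_one_sq_sub_norm_sub_one_sq w
      exact lt_of_pow_lt_pow_left₀ 2 (norm_nonneg _) (by linarith)
    show ‖_‖ < 1
    rw [norm_div, div_lt_one (norm_pos_iff.2 hw1)]
    exact hnorm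

lemma image_log_setOf_re_pos :
    log '' {w | 0 < w.re} = im ⁻¹' Ioo (-(Real.pi / 2)) (Real.pi / 2) := by
  ext ζ
  constructor
  · rintro ⟨w, hw, rfl⟩
    rw [mem_preimage, log_im, mem_Ioo, ← abs_lt]
    exact abs_arg_lt_pi_div_two_iff.2 (Or.inl hw)
  · rintro ⟨hζ₁, hζ₂⟩
    refine ⟨exp ζ, ?_, log_exp (by linarith [Real.pi_pos]) (by linarith [Real.pi_pos])⟩
    show 0 < (exp ζ).re
    rw [exp_re]
    exact mul_pos (Real.exp_pos _) (Real.cos_pos_of_mem_Ioo ⟨hζ₁, hζ₂⟩)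

end Complex

open Complex in
theorem stmt3 (h : ℝ) (hh : 0 < h) :
    (fun z : ℂ =>
        (1 / (h : ℂ)) * Complex.log ((1 + (h : ℂ) * z / 2) / (1 - (h : ℂ) * z / 2))) ''
      {z : ℂ | ‖z‖ < 2 / h}
    = {ζ : ℂ | -(Real.pi / (2 * h)) < ζ.im ∧ ζ.im < Real.pi / (2 * h)} := by
  have hζ : (fun z : ℂ => (1 / (h : ℂ)) * log ((1 + (h : ℂ) * z / 2) / (1 - (h : ℂ) * z / 2))) =
      (((1 / h : ℝ) : ℂ) * ·) ∘ log ∘ (fun u : ℂ => (1 + u) / (1 - u)) ∘ (((h / 2 : ℝ) : ℂ) * ·) := by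
    funext z
    have hscale : (h : ℂ) * z / 2 = ((h / 2 : ℝ) : ℂ) * z := by push_cast; ring
    simp only [Function.comp_apply, hscale]
    push_cast
    rfl
  have hdisc : ‖((h / 2 : ℝ) : ℂ)‖ * (2 / h) = 1 := by
    rw [norm_real, Real.norm_of_nonneg (by positivity)]
    field_simp
  rw [hζ, image_comp, image_comp, image_comp,
    image_const_mul_setOf_norm_lt (by exact_mod_cast (by positivity : h / 2 ≠ 0)), hdisc,
    image_cayley_setOf_norm_lt_one, image_log_setOf_re_pos,
    image_ofReal_mul_preimage_im_Ioo (by positivity)]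
  ext ζ
  simp only [mem_preimage, mem_Ioo, mem_ofPred_eq]
  rw [show 1 / h * (Real.pi / 2) = Real.pi / (2 * h) by ring]
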